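/- If η₁ and η₂ are independent sets of normalized AICs (for all r₁ ∈ η₁, r₂ ∈ η₂, lit(head(rᵢ)) shares no common or dual literals with body(r_{3−i})), then the operators T₁ and T₂ commute, and T for η₁ ∪ η₂ equals T₁ ∘ T₂ = T₂ ∘ T₁. -/
import Mathlib


/-- Update actions: add or remove an atom. -/
inductive Act (A : Type) : Type
  | add : A → Act A
  | rem : A → Act A

/-- The dual of an update action. -/
def Act.dual {A : Type} : Act A → Act A
  | .add a => .rem a
  | .rem a => .add a

/-- Literals: an atom or its negation. -/
inductive Lit (A : Type) : Type
  | pos : A → Lit A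
  | neg : A → Lit A

/-- The "dual" (negation) of a literal. -/
def Lit.negate {A : Type} : Lit A → Lit A
  | .pos a => .neg a
  | .neg a => .pos a

/-- The literal associated to an update action. -/
def litOf {A : Type} : Act A → Lit A
  | .add a => .pos a
  | .rem a => .neg a

/-- The update action associated to a literal. -/
def uaOf {A : Type} : Lit A → Act A
  | .pos a => .add a
  | .neg a => .rem a

/-- Satisfaction of a literal by a database. -/
def satLit {A : Type} (DB : Set A) : Lit A → Prop
  | .pos a => a ∈ DB
  | .neg a => a ∉ DB

/-- The result `U(DB)` of applying a set of update actions to a database. -/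
def applyUA {A : Type} (U : Set (Act A)) (DB : Set A) : Set A :=
  (DB ∪ {a | Act.add a ∈ U}) \ {a | Act.rem a ∈ U}

/-- A set of update actions is consistent if it has no action together with its dual. -/
def consistentUA {A : Type} (U : Set (Act A)) : Prop :=
  ∀ α ∈ U, α.dual ∉ U

/-- An action changes the database. -/
def changes {A : Type} (DB : Set A) : Act A → Prop
  | .add a => a ∉ DB
  | .rem a => a ∈ DB

/-- The operation `U ⊎ V = (U ∪ {α ∈ V | αᴰ ∉ U}) \ {α ∈ U | αᴰ ∈ V}`. -/
def uplus {A : Type} (U V : Set (Act A)) : Set (Act A) :=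
  (U ∪ {α | α ∈ V ∧ α.dual ∉ U}) \ {α | α ∈ U ∧ α.dual ∈ V}

/-- A normalized active integrity constraint. -/
structure NAIC (A : Type) where
  body : Set (Lit A)
  head : Act A
  hcond : litOf head.dual ∈ body

/-- Satisfaction of a body (set of literals) by a database. -/
def satBody {A : Type} (DB : Set A) (B : Set (Lit A)) : Prop :=
  ∀ ℓ ∈ B, satLit DB ℓ

/-- The operator `T(U) = U ⊎ {head(r) | U(DB) ⊨ body(r), r ∈ η}`. -/
def T {A : Type} (DB : Set A) (η : Set (NAIC A)) (U : Set (Act A)) : Set (Act A) :=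
  uplus U {α | ∃ r ∈ η, r.head = α ∧ satBody (applyUA U DB) r.body}

/-- `U` is a weak repair for `(DB, η)`. -/
def weakRepair {A : Type} (DB : Set A) (η : Set (NAIC A)) (U : Set (Act A)) : Prop :=
  (∀ α ∈ U, changes DB α) ∧ ∀ r ∈ η, ¬ satBody (applyUA U DB) r.body

/-- `U` is a repair for `(DB, η)`: a weak repair minimal wrt inclusion. -/
def repair {A : Type} (DB : Set A) (η : Set (NAIC A)) (U : Set (Act A)) : Prop :=
  weakRepair DB η U ∧ ∀ V ⊆ U, weakRepair DB η V → V = U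

/-- `U` is founded wrt `(DB, η)`. -/
def founded {A : Type} (DB : Set A) (η : Set (NAIC A)) (U : Set (Act A)) : Prop :=
  ∀ α ∈ U, ∃ r ∈ η, r.head = α ∧ satBody (applyUA (U \ {α}) DB) r.body

/-- `U` is a (strictly) grounded fixpoint-candidate of `T`: no `V ⊊ U` with `T(V) ∩ U ⊆ V`. -/
def strictlyGroundedT {A : Type} (DB : Set A) (η : Set (NAIC A)) (U : Set (Act A)) : Prop :=
  ¬ ∃ V : Set (Act A), V ⊂ U ∧ T DB η V ∩ U ⊆ V

/-- A grounded repair: a repair that is a (strictly) grounded fixpoint of `T`. -/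
def groundedRepair {A : Type} (DB : Set A) (η : Set (NAIC A)) (U : Set (Act A)) : Prop :=
  repair DB η U ∧ strictlyGroundedT DB η U

/-- A well-founded weak repair: a weak repair whose elements can be ordered
`α₁, …, αₙ` so that each `αᵢ` is the head of a rule applicable in `{α₁,…,α_{i-1}}(DB)`. -/
def wellFoundedWeakRepair {A : Type} (DB : Set A) (η : Set (NAIC A)) (U : Set (Act A)) : Prop :=
  weakRepair DB η U ∧ ∃ l : List (Act A), l.Nodup ∧ (∀ α, α ∈ U ↔ α ∈ l) ∧
    ∀ i : Fin l.length, ∃ r ∈ η, r.head = l.get i ∧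
      satBody (applyUA {β | β ∈ l.take i.val} DB) r.body

/-- `ℓ` shares no common or dual literal with the set `B`. -/
def noCommonOrDual {A : Type} (ℓ : Lit A) (B : Set (Lit A)) : Prop :=
  ℓ ∉ B ∧ ℓ.negate ∉ B

/-- `η₁ ⊥ η₂`: for all `r₁ ∈ η₁`, `r₂ ∈ η₂`, `lit(head(rᵢ))` and `body(r₍₃₋ᵢ₎)` contain
no common or dual literals. -/
def indepAIC {A : Type} (η₁ η₂ : Set (NAIC A)) : Prop :=
  ∀ r₁ ∈ η₁, ∀ r₂ ∈ η₂,
    noCommonOrDual (litOf r₁.head) r₂.body ∧ noCommonOrDual (litOf r₂.head) r₁.body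

/-! ### Auxiliary lemmas -/

lemma Act.dual_dual' {A : Type} (α : Act A) : α.dual.dual = α := by
  cases α <;> rfl

lemma litOf_dual {A : Type} (α : Act A) : litOf α.dual = (litOf α).negate := by
  cases α <;> rfl

lemma mem_uplus {A : Type} {U V : Set (Act A)} {α : Act A} :
    α ∈ uplus U V ↔ (α ∈ U ∨ (α ∈ V ∧ α.dual ∉ U)) ∧ ¬(α ∈ U ∧ α.dual ∈ V) :=
  Iff.rfl

/-- If `V₁` and `V₂` are dual-disjoint then applying `V₂` then `V₁` is applying
their union. -/
lemma uplus_uplus {A : Type} (U V₁ V₂ : Set (Act A))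
    (hdd : ∀ α, α ∈ V₁ → α ∉ V₂ ∧ α.dual ∉ V₂) :
    uplus (uplus U V₂) V₁ = uplus U (V₁ ∪ V₂) := by
  ext α
  have h1 := hdd α
  have h2 := hdd α.dual
  simp only [mem_uplus, Set.mem_union, Act.dual_dual'] at h1 h2 ⊢
  tauto

lemma mem_applyUA {A : Type} {U : Set (Act A)} {DB : Set A} {b : A} :
    b ∈ applyUA U DB ↔ (b ∈ DB ∨ Act.add b ∈ U) ∧ Act.rem b ∉ U :=
  Iff.rfl

lemma mem_applyUA_uplus {A : Type} {U V : Set (Act A)} {DB : Set A} {b : A}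
    (hadd : Act.add b ∉ V) (hrem : Act.rem b ∉ V) :
    b ∈ applyUA (uplus U V) DB ↔ b ∈ applyUA U DB := by
  have h1 : (Act.add b ∈ uplus U V) ↔ Act.add b ∈ U := by
    rw [mem_uplus]; show _ ↔ _
    have : (Act.add b).dual = Act.rem b := rfl
    rw [this]; tauto
  have h2 : (Act.rem b ∈ uplus U V) ↔ Act.rem b ∈ U := by
    rw [mem_uplus]; show _ ↔ _
    have : (Act.rem b).dual = Act.add b := rfl
    rw [this]; tauto
  rw [mem_applyUA, mem_applyUA, h1, h2]

/-- The set of applicable heads. -/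
def Hset {A : Type} (DB : Set A) (η : Set (NAIC A)) (U : Set (Act A)) : Set (Act A) :=
  {α | ∃ r ∈ η, r.head = α ∧ satBody (applyUA U DB) r.body}

lemma T_eq_uplus_Hset {A : Type} (DB : Set A) (η : Set (NAIC A)) (U : Set (Act A)) :
    T DB η U = uplus U (Hset DB η U) := rfl

lemma Hset_union {A : Type} (DB : Set A) (η₁ η₂ : Set (NAIC A)) (U : Set (Act A)) :
    Hset DB (η₁ ∪ η₂) U = Hset DB η₁ U ∪ Hset DB η₂ U := by
  ext α
  simp only [Hset, Set.mem_setOf_eq, Set.mem_union]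
  constructor
  · rintro ⟨r, hr | hr, h⟩
    · exact Or.inl ⟨r, hr, h⟩
    · exact Or.inr ⟨r, hr, h⟩
  · rintro (⟨r, hr, h⟩ | ⟨r, hr, h⟩)
    · exact ⟨r, Or.inl hr, h⟩
    · exact ⟨r, Or.inr hr, h⟩

/-- If heads from `ηb` avoid bodies of `ηa`, updating with a set of `ηb`-heads
does not change applicability of `ηa`-rules. -/
lemma Hset_uplus_invariant {A : Type} (DB : Set A) (ηa ηb : Set (NAIC A))
    (hind : ∀ ra ∈ ηa, ∀ rb ∈ ηb, noCommonOrDual (litOf rb.head) ra.body)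
    (U W : Set (Act A)) (hW : ∀ α ∈ W, ∃ r ∈ ηb, r.head = α) :
    Hset DB ηa (uplus U W) = Hset DB ηa U := by
  ext α
  simp only [Hset, Set.mem_setOf_eq]
  constructor <;> rintro ⟨r, hr, hh, hsat⟩ <;> refine ⟨r, hr, hh, fun ℓ hℓ => ?_⟩ <;>
  · have hsl := hsat ℓ hℓ
    obtain ⟨b, hb⟩ : ∃ b, ℓ = Lit.pos b ∨ ℓ = Lit.neg b := by
      cases ℓ with
      | pos b => exact ⟨b, Or.inl rfl⟩
      | neg b => exact ⟨b, Or.inr rfl⟩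
    have hadd : Act.add b ∉ W := by
      intro hmem
      obtain ⟨rb, hrb, hhead⟩ := hW _ hmem
      have hncd := hind r hr rb hrb
      rw [hhead] at hncd
      rcases hb with hb | hb <;> rw [hb] at hℓ
      · exact hncd.1 hℓ
      · exact hncd.2 hℓ
    have hrem : Act.rem b ∉ W := by
      intro hmem
      obtain ⟨rb, hrb, hhead⟩ := hW _ hmem
      have hncd := hind r hr rb hrb
      rw [hhead] at hncd
      rcases hb with hb | hb <;> rw [hb] at hℓ
      · exact hncd.2 hℓ
      · exact hncd.1 hℓ
    have key := mem_applyUA_uplus (U := U) (DB := DB) hadd hrem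
    rcases hb with hb | hb <;> subst hb <;> simp only [satLit] at hsl ⊢
    · tauto
    · tauto

/-- Heads of independent rules are neither equal nor dual. -/
lemma head_ne {A : Type} {ra rb : NAIC A}
    (hcd : noCommonOrDual (litOf ra.head) rb.body) :
    ra.head ≠ rb.head ∧ ra.head ≠ rb.head.dual := by
  have hc := rb.hcond
  constructor
  · intro he
    apply hcd.2
    rw [← litOf_dual, he]
    exact hc
  · intro he
    apply hcd.1
    rw [he]
    exact hc

lemma Hset_dd {A : Type} (DB : Set A) {η₁ η₂ : Set (NAIC A)} (h : indepAIC η₁ η₂)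
    (U U' : Set (Act A)) :
    ∀ α, α ∈ Hset DB η₁ U → α ∉ Hset DB η₂ U' ∧ α.dual ∉ Hset DB η₂ U' := by
  rintro α ⟨r₁, hr₁, hh₁, -⟩
  constructor
  · rintro ⟨r₂, hr₂, hh₂, -⟩
    exact (head_ne (h r₁ hr₁ r₂ hr₂).1).1 (hh₁.trans hh₂.symm)
  · rintro ⟨r₂, hr₂, hh₂, -⟩
    exact (head_ne (h r₁ hr₁ r₂ hr₂).1).2 (by rw [hh₁, hh₂, Act.dual_dual'])

lemma Hset_dd' {A : Type} (DB : Set A) {η₁ η₂ : Set (NAIC A)} (h : indepAIC η₁ η₂)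
    (U U' : Set (Act A)) :
    ∀ α, α ∈ Hset DB η₂ U → α ∉ Hset DB η₁ U' ∧ α.dual ∉ Hset DB η₁ U' := by
  rintro α ⟨r₂, hr₂, hh₂, -⟩
  constructor
  · rintro ⟨r₁, hr₁, hh₁, -⟩
    exact (head_ne (h r₁ hr₁ r₂ hr₂).2).1 (hh₂.trans hh₁.symm)
  · rintro ⟨r₁, hr₁, hh₁, -⟩
    exact (head_ne (h r₁ hr₁ r₂ hr₂).2).2 (by rw [hh₂, hh₁, Act.dual_dual'])

/-- If `η₁ ⊥ η₂`, the operators `T₁` and `T₂` commute and `T = T₁ ∘ T₂ = T₂ ∘ T₁`. -/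
theorem indep_commute {A : Type} (DB : Set A) (η₁ η₂ : Set (NAIC A))
    (hdisj : Disjoint η₁ η₂) (h : indepAIC η₁ η₂) :
    (∀ U, T DB η₁ (T DB η₂ U) = T DB η₂ (T DB η₁ U)) ∧
    (∀ U, T DB (η₁ ∪ η₂) U = T DB η₁ (T DB η₂ U)) := by
  have hW₁ : ∀ U, ∀ α ∈ Hset DB η₁ U, ∃ r ∈ η₁, r.head = α := by
    rintro U α ⟨r, hr, hh, -⟩; exact ⟨r, hr, hh⟩
  have hW₂ : ∀ U, ∀ α ∈ Hset DB η₂ U, ∃ r ∈ η₂, r.head = α := by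
    rintro U α ⟨r, hr, hh, -⟩; exact ⟨r, hr, hh⟩
  have hind₁ : ∀ ra ∈ η₁, ∀ rb ∈ η₂, noCommonOrDual (litOf rb.head) ra.body :=
    fun ra hra rb hrb => (h ra hra rb hrb).2
  have hind₂ : ∀ ra ∈ η₂, ∀ rb ∈ η₁, noCommonOrDual (litOf rb.head) ra.body :=
    fun ra hra rb hrb => (h rb hrb ra hra).1
  have key12 : ∀ U, T DB η₁ (T DB η₂ U) = uplus U (Hset DB η₁ U ∪ Hset DB η₂ U) := by
    intro U
    rw [T_eq_uplus_Hset, T_eq_uplus_Hset,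
      Hset_uplus_invariant DB η₁ η₂ hind₁ U _ (hW₂ U),
      uplus_uplus U _ _ (Hset_dd DB h U U)]
  have key21 : ∀ U, T DB η₂ (T DB η₁ U) = uplus U (Hset DB η₁ U ∪ Hset DB η₂ U) := by
    intro U
    rw [T_eq_uplus_Hset, T_eq_uplus_Hset,
      Hset_uplus_invariant DB η₂ η₁ hind₂ U _ (hW₁ U),
      uplus_uplus U _ _ (Hset_dd' DB h U U), Set.union_comm]
  refine ⟨fun U => (key12 U).trans (key21 U).symm, fun U => ?_⟩
  rw [T_eq_uplus_Hset, Hset_union, key12]
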